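/- arXiv:1301.3375 — 2 statements merged into one kernel-verified Lean document; each statement's English description precedes it below -/
import Mathlib

section
/- Let Φ be a d×K unit-norm tight frame with frame constant A = K/d, i.e., ΦΦ* = A·I_d. Let c ∈ ℝ^K be nonnegative nonincreasing with ‖c‖₂ = 1, p uniformly random over permutations, σ uniformly random over signs, and i_p = p⁻¹(1). Then E_p E_σ |⟨φ_{i_p}, Φ c_{p,σ}⟩|² = c₁² + ((1−c₁²)/(K−1))(A − 1). -/
open scoped RealInnerProductSpace BigOperators

/-!
Averaging over the signs kills the cross terms, leaving `∑ⱼ c_{p j}² ⟪φ_{i_p}, φⱼ⟫²`.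
Averaging over `p`, the weight `c₁²` always sits on the diagonal entry `⟪φ_{i_p}, φ_{i_p}⟫² = 1`,
while by symmetry each other weight sees the same average of `⟪φᵢ, φⱼ⟫²` over pairs `i ≠ j`.
That average is `(A - 1)/(K - 1)`, since every row of the squared Gram matrix sums to `A`
(tightness) and has diagonal entry `1` (unit norm).
-/

open Finset

section Signs

variable {ι : Type*} [Fintype ι] [DecidableEq ι]

/-- Flipping the sign at `j` is an involution of the sign patterns that negates the summand. -/
lemma sum_sign_mul_sign_of_ne {j k : ι} (hjk : j ≠ k) :
    ∑ σ : ι → Bool, (if σ j then (1 : ℝ) else -1) * (if σ k then (1 : ℝ) else -1) = 0 := by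
  have hflip : Function.Involutive fun σ : ι → Bool => Function.update σ j (!σ j) := by
    intro σ
    funext i
    by_cases hi : i = j <;> simp [hi]
  have hneg := Equiv.sum_comp hflip.toPerm
    fun σ => (if σ j then (1 : ℝ) else -1) * (if σ k then (1 : ℝ) else -1)
  have hflip_neg : ∀ σ : ι → Bool,
      (if Function.Involutive.toPerm _ hflip σ j then (1 : ℝ) else -1)
        * (if Function.Involutive.toPerm _ hflip σ k then (1 : ℝ) else -1)
        = -((if σ j then (1 : ℝ) else -1) * (if σ k then (1 : ℝ) else -1)) := by
    intro σ
    simp only [Function.Involutive.coe_toPerm, Function.update_self,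
      Function.update_of_ne hjk.symm]
    cases σ j <;> cases σ k <;> simp
  rw [sum_congr rfl fun σ _ => hflip_neg σ, sum_neg_distrib] at hneg
  linarith

lemma sum_sq_sum_sign_mul (b : ι → ℝ) :
    ∑ σ : ι → Bool, (∑ j, (if σ j then (1 : ℝ) else -1) * b j) ^ 2
      = 2 ^ Fintype.card ι * ∑ j, b j ^ 2 := by
  have hexpand : ∀ σ : ι → Bool, (∑ j, (if σ j then (1 : ℝ) else -1) * b j) ^ 2
      = ∑ j, ∑ k, b j * b k *
          ((if σ j then (1 : ℝ) else -1) * (if σ k then (1 : ℝ) else -1)) := by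
    intro σ
    rw [sq, sum_mul_sum]
    exact sum_congr rfl fun j _ => sum_congr rfl fun k _ => by ring
  simp_rw [hexpand]
  rw [sum_comm, mul_sum]
  refine sum_congr rfl fun j _ => ?_
  rw [sum_comm, sum_eq_single j
    (fun k _ hkj => by rw [← mul_sum, sum_sign_mul_sign_of_ne hkj.symm, mul_zero]) (by simp)]
  have hsq : ∀ σ : ι → Bool,
      b j * b j * ((if σ j then (1 : ℝ) else -1) * (if σ j then (1 : ℝ) else -1)) = b j ^ 2 := by
    intro σ
    cases σ j <;> simp [sq]
  rw [sum_congr rfl fun σ _ => hsq σ]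
  simp [mul_comm]

variable {E : Type*} [NormedAddCommGroup E] [InnerProductSpace ℝ E]

lemma sum_sign_inner_sum_smul_sq (x : E) (v : ι → E) (b : ι → ℝ) :
    ∑ σ : ι → Bool, ⟪x, ∑ j, ((if σ j then (1 : ℝ) else -1) * b j) • v j⟫ ^ 2
      = 2 ^ Fintype.card ι * ∑ j, (b j * ⟪x, v j⟫) ^ 2 := by
  simp_rw [inner_sum, real_inner_smul_right, mul_assoc]
  exact sum_sq_sum_sign_mul _

end Signs

section Perm

variable {ι : Type*} [Fintype ι] [DecidableEq ι]

/-- Precomposing with the transposition of `m` and `m'` fixes `z` and moves `m'` to `m`. -/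
lemma sum_perm_apply_apply_eq_of_ne {M : Type*} [AddCommMonoid M] (g : ι → ι → M)
    {z m m' : ι} (hm : m ≠ z) (hm' : m' ≠ z) :
    ∑ p : Equiv.Perm ι, g (p z) (p m) = ∑ p : Equiv.Perm ι, g (p z) (p m') := by
  rw [← Equiv.sum_comp (Equiv.mulRight (Equiv.swap m' m))]
  refine sum_congr rfl fun p _ => ?_
  simp [Equiv.Perm.mul_apply, Equiv.swap_apply_of_ne_of_ne hm'.symm hm.symm]

variable (g : ι → ι → ℝ) {a B : ℝ}

lemma sum_perm_apply_apply_of_ne (hdiag : ∀ i, g i i = a) (hrow : ∀ i, ∑ j, g i j = B)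
    {z m : ι} (hm : m ≠ z) :
    ∑ p : Equiv.Perm ι, g (p z) (p m)
      = (Fintype.card ι).factorial * (B - a) / (Fintype.card ι - 1) := by
  have hcard : (Fintype.card ι : ℝ) - 1 ≠ 0 := by
    have : 1 < Fintype.card ι := Fintype.one_lt_card_iff.mpr ⟨m, z, hm⟩
    have : (1 : ℝ) < Fintype.card ι := by exact_mod_cast this
    linarith
  have hoff : ∀ p : Equiv.Perm ι, ∑ m' ∈ univ.erase z, g (p z) (p m') = B - a := by
    intro p
    rw [sum_erase_eq_sub (mem_univ z), Equiv.sum_comp p (g (p z)), hrow, hdiag]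
  have hsum : ((Fintype.card ι : ℝ) - 1) * ∑ p : Equiv.Perm ι, g (p z) (p m)
      = (Fintype.card ι).factorial * (B - a) := by
    calc ((Fintype.card ι : ℝ) - 1) * ∑ p : Equiv.Perm ι, g (p z) (p m)
        = ∑ m' ∈ univ.erase z, ∑ p : Equiv.Perm ι, g (p z) (p m') := by
          rw [sum_congr rfl fun m' hm' =>
            sum_perm_apply_apply_eq_of_ne g (ne_of_mem_erase hm') hm, sum_const,
            card_erase_of_mem (mem_univ z), card_univ, nsmul_eq_mul,
            Nat.cast_pred (Fintype.card_pos_iff.mpr ⟨z⟩)]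
      _ = (Fintype.card ι).factorial * (B - a) := by
          rw [sum_comm, sum_congr rfl fun p _ => hoff p, sum_const, card_univ,
            Fintype.card_perm, nsmul_eq_mul]
  rw [eq_div_iff hcard, ← hsum, mul_comm]

lemma sum_perm_sum_mul_apply_apply (hdiag : ∀ i, g i i = a) (hrow : ∀ i, ∑ j, g i j = B)
    (w : ι → ℝ) (z : ι) :
    ∑ p : Equiv.Perm ι, ∑ m, w m * g (p z) (p m)
      = (Fintype.card ι).factorial
          * (w z * a + (∑ m ∈ univ.erase z, w m) * ((B - a) / (Fintype.card ι - 1))) := by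
  rw [sum_comm, ← add_sum_erase univ (fun m => ∑ p : Equiv.Perm ι, w m * g (p z) (p m))
    (mem_univ z)]
  simp_rw [← mul_sum]
  have hoff : ∀ m ∈ univ.erase z, w m * ∑ p : Equiv.Perm ι, g (p z) (p m)
      = w m * ((Fintype.card ι).factorial * (B - a) / (Fintype.card ι - 1)) := fun m hm => by
    rw [sum_perm_apply_apply_of_ne g hdiag hrow (ne_of_mem_erase hm)]
  rw [sum_congr rfl hoff]
  simp only [hdiag, sum_const, card_univ, Fintype.card_perm, nsmul_eq_mul, ← sum_mul]
  ring

end Perm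

/-- for a unit-norm tight frame `Φ` with frame constant `A = K/d`, the
expectation over permutations and signs of `|⟨φ_{i_p}, Φ c_{p,σ}⟩|²`. -/
theorem expectation_max_response_tight_frame {d K : ℕ} (hK : 2 ≤ K)
    (φ : Fin K → EuclideanSpace ℝ (Fin d))
    (hφ : ∀ i, ‖φ i‖ = 1)
    (A : ℝ)
    (htf : ∀ v : EuclideanSpace ℝ (Fin d), ∑ i, (⟪φ i, v⟫ : ℝ) ^ 2 = A * ‖v‖ ^ 2)
    (c : Fin K → ℝ)
    (hc2 : ∑ i, (c i) ^ 2 = 1) :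
    (∑ p : Equiv.Perm (Fin K), ∑ σ : Fin K → Bool,
        |(⟪φ (p.symm ⟨0, by omega⟩),
            ∑ j, ((if σ j then (1 : ℝ) else -1) * c (p j)) • φ j⟫)| ^ 2)
      / (K.factorial * 2 ^ K)
    = (c ⟨0, by omega⟩) ^ 2
      + (1 - (c ⟨0, by omega⟩) ^ 2) / ((K : ℝ) - 1) * (A - 1) := by
  set z : Fin K := ⟨0, by omega⟩
  have hdiag : ∀ i, ⟪φ i, φ i⟫ ^ 2 = 1 := fun i => by
    rw [real_inner_self_eq_norm_sq, hφ i, one_pow, one_pow]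
  have hrow : ∀ i, ∑ j, ⟪φ i, φ j⟫ ^ 2 = A := fun i => by
    simpa [hφ i, real_inner_comm] using htf (φ i)
  have hsigns : ∀ p : Equiv.Perm (Fin K),
      ∑ σ : Fin K → Bool,
          |⟪φ (p.symm z), ∑ j, ((if σ j then (1 : ℝ) else -1) * c (p j)) • φ j⟫| ^ 2
        = 2 ^ K * ∑ m, c m ^ 2 * ⟪φ (p⁻¹ z), φ (p⁻¹ m)⟫ ^ 2 := by
    intro p
    simp_rw [sq_abs]
    rw [sum_sign_inner_sum_smul_sq, Fintype.card_fin, ← Equiv.sum_comp p.symm]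
    simp [mul_pow, Equiv.Perm.inv_def]
  rw [sum_congr rfl fun p _ => hsigns p, ← mul_sum,
    ← Equiv.sum_comp (Equiv.inv (Equiv.Perm (Fin K)))]
  simp only [Equiv.inv_apply, inv_inv]
  rw [sum_perm_sum_mul_apply_apply (fun i j => ⟪φ i, φ j⟫ ^ 2) hdiag hrow,
    sum_erase_eq_sub (mem_univ z), hc2, Fintype.card_fin]
  field_simp
end

section
/- Fix i ∈ {1,…,K} and S ≤ K. For a uniformly random permutation p of {1,…,K}, a uniformly random sign sequence σ, a nonnegative nonincreasing sequence c with ‖c‖₂ = 1, and I_p = p⁻¹({1,…,S}), and for arbitrary d×K matrices Ψ (with any S of its columns linearly independent) and Φ with unit-norm columns, one has E_p E_σ ‖P_{I_p}(Ψ) Φ c_{p,σ}‖₂² = ((1−γ²)/(K−S)) · C(K,S)⁻¹ Σ_{|J|=S} ‖P_J(Ψ) Φ‖_F² + (γ²/S − (1−γ²)/(K−S)) · C(K,S)⁻¹ Σ_{|J|=S} ‖P_J(Ψ) Φ_J‖_F², where γ² = c₁² + … + c_S². -/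
/-!
Averaging over the signs kills the cross terms, since the signs `σ j` are orthogonal, and
leaves `∑ j, c (p j) ^ 2 * ‖P_{I_p} φ j‖ ^ 2`. Writing `q = p⁻¹`, the support `I_p` is `q • T`
with `T = {i | i < S}`, and the term of weight `c i ^ 2` becomes `‖P_{q • T} φ (q i)‖ ^ 2`.
For `i ∈ T` its sum over `q` does not depend on `i` (compose `q` with a transposition inside `T`),
hence equals `1 / S` of the sum of `‖P_{q • T} φ j‖ ^ 2` over `j ∈ q • T`; likewise with `K - S`
for `i ∉ T`. Finally `q • T` runs through every `S`-subset exactly `K! / C(K, S)` times.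
-/

open scoped RealInnerProductSpace BigOperators

/-- Orthogonal projection (as an endomorphism) onto the span of the columns of `v`
indexed by the finite set `J`. -/
noncomputable def projSpan {d K : ℕ} (v : Fin K → EuclideanSpace ℝ (Fin d))
    (J : Finset (Fin K)) :
    EuclideanSpace ℝ (Fin d) →L[ℝ] EuclideanSpace ℝ (Fin d) :=
  (Submodule.span ℝ (v '' ↑J)).subtypeL ∘L Submodule.orthogonalProjection (Submodule.span ℝ (v '' ↑J))

open Finset Equiv
open scoped Pointwise

section Signs
variable {ι : Type*} [Fintype ι] [DecidableEq ι]

theorem sum_sign_mul_sign (j j' : ι) :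
    ∑ σ : ι → Bool, (if σ j then (1 : ℝ) else -1) * (if σ j' then 1 else -1)
      = if j = j' then 2 ^ Fintype.card ι else 0 := by
  split_ifs with h
  · subst h
    have hsq (b : Bool) : (if b then (1 : ℝ) else -1) * (if b then 1 else -1) = 1 := by
      cases b <;> norm_num
    simp [hsq]
  · let flip := Equiv.piCongrRight (Pi.mulSingle j Equiv.boolNot : ι → Equiv.Perm Bool)
    have hflip (σ : ι → Bool) :
        (if flip σ j then (1 : ℝ) else -1) * (if flip σ j' then 1 else -1)
          = -((if σ j then (1 : ℝ) else -1) * (if σ j' then 1 else -1)) := by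
      have hj : flip σ j = !σ j := by simp [flip]
      have hj' : flip σ j' = σ j' := by simp [flip, Pi.mulSingle_eq_of_ne' h]
      rw [hj, hj']
      cases σ j <;> cases σ j' <;> norm_num
    have := Equiv.sum_comp flip
      (fun σ => (if σ j then (1 : ℝ) else -1) * (if σ j' then 1 else -1))
    simp only [hflip, sum_neg_distrib] at this
    linarith

theorem sum_norm_sq_signed_sum {E : Type*} [NormedAddCommGroup E] [InnerProductSpace ℝ E]
    (v : ι → E) :
    ∑ σ : ι → Bool, ‖∑ j, (if σ j then (1 : ℝ) else -1) • v j‖ ^ 2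
      = 2 ^ Fintype.card ι * ∑ j, ‖v j‖ ^ 2 := by
  calc ∑ σ : ι → Bool, ‖∑ j, (if σ j then (1 : ℝ) else -1) • v j‖ ^ 2
      = ∑ j, ∑ j', (∑ σ : ι → Bool,
          (if σ j then (1 : ℝ) else -1) * (if σ j' then 1 else -1)) * ⟪v j, v j'⟫ := by
        simp_rw [← real_inner_self_eq_norm_sq, sum_inner, inner_sum, real_inner_smul_left,
          real_inner_smul_right, sum_mul]
        rw [sum_comm]
        refine sum_congr rfl fun j _ => ?_
        rw [sum_comm]
        simp only [mul_assoc]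
    _ = 2 ^ Fintype.card ι * ∑ j, ‖v j‖ ^ 2 := by
        simp only [sum_sign_mul_sign]
        simp [ite_mul, mul_sum]

theorem sum_norm_sq_map_signed_sum {E F 𝓕 : Type*} [AddCommGroup E] [Module ℝ E]
    [NormedAddCommGroup F] [InnerProductSpace ℝ F] [FunLike 𝓕 E F] [LinearMapClass 𝓕 ℝ E F]
    (L : 𝓕) (a : ι → ℝ) (v : ι → E) :
    ∑ σ : ι → Bool, ‖L (∑ j, ((if σ j then (1 : ℝ) else -1) * a j) • v j)‖ ^ 2
      = 2 ^ Fintype.card ι * ∑ j, a j ^ 2 * ‖L (v j)‖ ^ 2 := by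
  simp_rw [map_sum, map_smul, mul_smul]
  rw [sum_norm_sq_signed_sum]
  simp [norm_smul, mul_pow]

end Signs

section Permutations
variable {α : Type*} [DecidableEq α]

theorem exists_perm_smul_eq {T J : Finset α} (h : #J = #T) : ∃ q : Perm α, q • T = J := by
  have := Set.powersetCard.isPretransitive (α := α) (n := #T)
  obtain ⟨q, hq⟩ := MulAction.exists_smul_eq (Perm α)
    (Set.powersetCard.ofCard (rfl : #T = #T)) (Set.powersetCard.ofCard h)
  exact ⟨q, by simpa using congrArg Subtype.val hq⟩

theorem swap_smul_finset_of_mem {T : Finset α} {i i' : α} (hi : i ∈ T) (hi' : i' ∈ T) :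
    swap i i' • T = T := by
  ext x
  rw [← inv_smul_mem_iff, swap_inv, Perm.smul_def, swap_apply_def]
  split_ifs with h h' <;> simp_all

variable [Fintype α]

theorem choose_mul_sum_perm_smul (T : Finset α) (f : Finset α → ℝ) :
    (Fintype.card α).choose #T * ∑ q : Perm α, f (q • T)
      = (Fintype.card α).factorial * ∑ J ∈ powersetCard #T univ, f J := by
  have horbit : ∀ J ∈ powersetCard #T (univ : Finset α),
      ∑ q : Perm α, f (q • T) = ∑ q : Perm α, f (q • J) := by
    intro J hJ
    obtain ⟨e, rfl⟩ := exists_perm_smul_eq (mem_powersetCard_univ.1 hJ)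
    simp_rw [smul_smul]
    exact (Equiv.sum_comp (Equiv.mulRight e) _).symm
  have hrelabel (q : Perm α) :
      ∑ J ∈ powersetCard #T univ, f (q • J) = ∑ J ∈ powersetCard #T univ, f J :=
    sum_equiv (MulAction.toPerm q : Perm (Finset α)) (by simp) (by simp)
  calc (Fintype.card α).choose #T * ∑ q : Perm α, f (q • T)
      = ∑ _J ∈ powersetCard #T (univ : Finset α), ∑ q : Perm α, f (q • T) := by
        rw [sum_const, card_powersetCard, card_univ, nsmul_eq_mul]
    _ = ∑ q : Perm α, ∑ J ∈ powersetCard #T univ, f (q • J) := by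
        rw [sum_congr rfl horbit, sum_comm]
    _ = (Fintype.card α).factorial * ∑ J ∈ powersetCard #T univ, f J := by
        rw [sum_congr rfl fun q _ => hrelabel q, sum_const, card_univ, Fintype.card_perm,
          nsmul_eq_mul]

theorem card_mul_sum_perm_apply {T : Finset α} {i : α} (hi : i ∈ T) (g : Finset α → α → ℝ) :
    #T * ∑ q : Perm α, g (q • T) (q i) = ∑ q : Perm α, ∑ j ∈ q • T, g (q • T) j := by
  have hswap : ∀ i' ∈ T, ∑ q : Perm α, g (q • T) (q i') = ∑ q : Perm α, g (q • T) (q i) := by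
    intro i' hi'
    rw [← Equiv.sum_comp (Equiv.mulRight (swap i i'))]
    simp [mul_smul, swap_smul_finset_of_mem hi hi']
  calc #T * ∑ q : Perm α, g (q • T) (q i)
      = ∑ q : Perm α, ∑ i' ∈ T, g (q • T) (q i') := by
        rw [sum_comm, sum_congr rfl hswap, sum_const, nsmul_eq_mul]
    _ = ∑ q : Perm α, ∑ j ∈ q • T, g (q • T) j := by
        refine sum_congr rfl fun q _ => ?_
        rw [smul_finset_def, sum_image fun x _ y _ h => MulAction.injective q h]
        rfl

theorem Finset.smul_finset_compl {G : Type*} [Group G] [MulAction G α] (a : G) (s : Finset α) :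
    a • sᶜ = (a • s)ᶜ := by
  rw [compl_eq_univ_sdiff, compl_eq_univ_sdiff, smul_finset_sdiff, smul_finset_univ]

theorem sum_perm_sum_preimage_eq (T : Finset α) (w : α → ℝ) (g : Finset α → α → ℝ) :
    ∑ p : Perm α, ∑ j, w (p j) * g {x | p x ∈ T} j
      = ∑ i, w i * ∑ q : Perm α, g (q • T) (q i) := by
  have hpre (q : Perm α) : ({x | q⁻¹ x ∈ T} : Finset α) = q • T := by
    ext x
    simp [← inv_smul_mem_iff]
  calc ∑ p : Perm α, ∑ j, w (p j) * g {x | p x ∈ T} j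
      = ∑ q : Perm α, ∑ j, w (q⁻¹ j) * g (q • T) j := by
        rw [← Equiv.sum_comp (Equiv.inv (Perm α))]
        simp only [Equiv.inv_apply, hpre]
    _ = ∑ q : Perm α, ∑ i, w i * g (q • T) (q i) := by
        refine sum_congr rfl fun q _ => ?_
        rw [← Equiv.sum_comp q]
        simp
    _ = ∑ i, w i * ∑ q : Perm α, g (q • T) (q i) := by
        rw [sum_comm]
        simp_rw [mul_sum]

-- If `T` or `Tᶜ` is empty, its weight sum vanishes too, so the junk value `x / 0 = 0` is correct.
theorem choose_mul_sum_perm_weighted (T : Finset α) (w : α → ℝ) (g : Finset α → α → ℝ) :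
    (Fintype.card α).choose #T * ∑ p : Perm α, ∑ j, w (p j) * g {x | p x ∈ T} j
      = (Fintype.card α).factorial *
          ((∑ i ∈ T, w i) / #T * ∑ J ∈ powersetCard #T univ, ∑ j ∈ J, g J j
            + (∑ i ∈ Tᶜ, w i) / #Tᶜ * ∑ J ∈ powersetCard #T univ, ∑ j ∈ Jᶜ, g J j) := by
  have hin : ∀ i ∈ T, ∑ q : Perm α, g (q • T) (q i)
      = (∑ q : Perm α, ∑ j ∈ q • T, g (q • T) j) / #T := fun i hi => by
    rw [← card_mul_sum_perm_apply hi, mul_div_cancel_left₀]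
    exact_mod_cast (card_pos.2 ⟨i, hi⟩).ne'
  have hout : ∀ i ∈ Tᶜ, ∑ q : Perm α, g (q • T) (q i)
      = (∑ q : Perm α, ∑ j ∈ (q • T)ᶜ, g (q • T) j) / #Tᶜ := fun i hi => by
    have := card_mul_sum_perm_apply hi fun J => g Jᶜ
    simp only [smul_finset_compl, compl_compl] at this
    rw [← this, mul_div_cancel_left₀]
    exact_mod_cast (card_pos.2 ⟨i, hi⟩).ne'
  calc (Fintype.card α).choose #T * ∑ p : Perm α, ∑ j, w (p j) * g {x | p x ∈ T} j
      = (Fintype.card α).choose #T * ∑ i, w i * ∑ q : Perm α, g (q • T) (q i) := by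
        rw [sum_perm_sum_preimage_eq]
    _ = (Fintype.card α).choose #T *
          ((∑ i ∈ T, w i) / #T * ∑ q : Perm α, ∑ j ∈ q • T, g (q • T) j
            + (∑ i ∈ Tᶜ, w i) / #Tᶜ * ∑ q : Perm α, ∑ j ∈ (q • T)ᶜ, g (q • T) j) := by
        rw [← sum_add_sum_compl T, sum_congr rfl fun i hi => congrArg (w i * ·) (hin i hi),
          sum_congr rfl fun i hi => congrArg (w i * ·) (hout i hi), ← sum_mul, ← sum_mul]
        ring
    _ = _ := by
        linear_combination (∑ i ∈ T, w i) / #T * choose_mul_sum_perm_smul T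
            (fun J => ∑ j ∈ J, g J j)
          + (∑ i ∈ Tᶜ, w i) / #Tᶜ * choose_mul_sum_perm_smul T (fun J => ∑ j ∈ Jᶜ, g J j)

end Permutations

theorem expectation_projection_general_general {d K S : ℕ} (hSK : S < K)
    (φ ψ : Fin K → EuclideanSpace ℝ (Fin d))
    (c : Fin K → ℝ) (hc2 : ∑ i, (c i) ^ 2 = 1)
    (γ2 : ℝ) (hγ : γ2 = ∑ i ∈ Finset.univ.filter (fun i : Fin K => (i : ℕ) < S), (c i) ^ 2) :
    (∑ p : Equiv.Perm (Fin K), ∑ σ : Fin K → Bool,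
        ‖projSpan ψ (Finset.univ.filter fun i => ((p i : ℕ) < S))
            (∑ j, ((if σ j then (1 : ℝ) else -1) * c (p j)) • φ j)‖ ^ 2)
      / (K.factorial * 2 ^ K)
    = (1 - γ2) / ((K : ℝ) - S) * ((K.choose S : ℝ))⁻¹ *
        (∑ J ∈ Finset.univ.filter (fun J : Finset (Fin K) => J.card = S),
          ∑ i, ‖projSpan ψ J (φ i)‖ ^ 2)
      + (γ2 / S - (1 - γ2) / ((K : ℝ) - S)) * ((K.choose S : ℝ))⁻¹ *
        (∑ J ∈ Finset.univ.filter (fun J : Finset (Fin K) => J.card = S),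
          ∑ i ∈ J, ‖projSpan ψ J (φ i)‖ ^ 2) := by
  set T : Finset (Fin K) := {i | (i : ℕ) < S}
  have hcardT : #T = S := by simp [T, Fin.card_filter_val_lt, hSK.le]
  have hcardTc : (#Tᶜ : ℝ) = K - S := by
    rw [card_compl, Fintype.card_fin, hcardT, Nat.cast_sub hSK.le]
  have hγc : ∑ i ∈ Tᶜ, c i ^ 2 = 1 - γ2 := by
    rw [hγ, ← hc2, ← sum_add_sum_compl T]
    ring
  have hpre (p : Perm (Fin K)) :
      univ.filter (fun i => (p i : ℕ) < S) = univ.filter (fun i => p i ∈ T) := by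
    simp [T]
  have hweighted := choose_mul_sum_perm_weighted T (fun i => c i ^ 2)
    (fun J j => ‖projSpan ψ J (φ j)‖ ^ 2)
  rw [hcardT, Fintype.card_fin, hcardTc, ← hγ, hγc] at hweighted
  have hsplit (J : Finset (Fin K)) : ∑ i, ‖projSpan ψ J (φ i)‖ ^ 2
      = ∑ i ∈ J, ‖projSpan ψ J (φ i)‖ ^ 2 + ∑ i ∈ Jᶜ, ‖projSpan ψ J (φ i)‖ ^ 2 :=
    (sum_add_sum_compl J _).symm
  have hC : (K.choose S : ℝ) ≠ 0 := by exact_mod_cast (Nat.choose_pos hSK.le).ne'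
  have hK : (K.factorial : ℝ) ≠ 0 := by exact_mod_cast K.factorial_ne_zero
  simp only [hpre, sum_norm_sq_map_signed_sum, Fintype.card_fin, univ_filter_card_eq, hsplit,
    sum_add_distrib, ← mul_sum]
  field_simp
  linear_combination hweighted

/-- expectation of the squared norm of the projection `P_{I_p}(Ψ) Φ c_{p,σ}`
over uniformly random permutations and signs. -/
theorem expectation_projection_general {d K S : ℕ} (hS : 0 < S) (hSK : S < K)
    (φ ψ : Fin K → EuclideanSpace ℝ (Fin d))
    (hφ : ∀ i, ‖φ i‖ = 1) (hψ : ∀ i, ‖ψ i‖ = 1)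
    (hind : ∀ J : Finset (Fin K), J.card = S →
      LinearIndependent ℝ (fun j : J => ψ j))
    (c : Fin K → ℝ) (hc0 : ∀ i, 0 ≤ c i) (hmono : ∀ i j : Fin K, i ≤ j → c j ≤ c i)
    (hc2 : ∑ i, (c i) ^ 2 = 1)
    (γ2 : ℝ) (hγ : γ2 = ∑ i ∈ Finset.univ.filter (fun i : Fin K => (i : ℕ) < S), (c i) ^ 2) :
    (∑ p : Equiv.Perm (Fin K), ∑ σ : Fin K → Bool,
        ‖projSpan ψ (Finset.univ.filter fun i => ((p i : ℕ) < S))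
            (∑ j, ((if σ j then (1 : ℝ) else -1) * c (p j)) • φ j)‖ ^ 2)
      / (K.factorial * 2 ^ K)
    = (1 - γ2) / ((K : ℝ) - S) * ((K.choose S : ℝ))⁻¹ *
        (∑ J ∈ Finset.univ.filter (fun J : Finset (Fin K) => J.card = S),
          ∑ i, ‖projSpan ψ J (φ i)‖ ^ 2)
      + (γ2 / S - (1 - γ2) / ((K : ℝ) - S)) * ((K.choose S : ℝ))⁻¹ *
        (∑ J ∈ Finset.univ.filter (fun J : Finset (Fin K) => J.card = S),
          ∑ i ∈ J, ‖projSpan ψ J (φ i)‖ ^ 2) :=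
  expectation_projection_general_general hSK φ ψ c hc2 γ2 hγ
end
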